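/- arXiv:2312.16704 — 5 statements merged into one kernel-verified Lean document; each statement's English description precedes it below -/
import Mathlib

section
/- (Jensen's inequality for Choquet integrals, concave case.) Let X be a finite nonempty set, μ a monotone measure on X, f : X → [0,∞), and Φ : [0,∞) → [0,∞) a non-decreasing concave function. Then Φ(∫ f dμ) ≥ ∫ (Φ ∘ f) dμ, where both integrals are Choquet integrals w.r.t. μ. -/
/-- A monotone measure on a finite set `X`. -/
structure IsMonotoneMeasure {X : Type*} (μ : Set X → ℝ) : Prop where
  empty : μ ∅ = 0
  univ : μ Set.univ = 1
  mono : ∀ E F : Set X, E ⊆ F → μ E ≤ μ F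

/-- The Choquet integral of `f : X → ℝ` w.r.t. `μ` on the finite set `X`:
`∑ i, f(x*_i) · (μ(A*_i) − μ(A*_{i+1}))` where `x*` enumerates `X` with
`f(x*_1) ≤ … ≤ f(x*_n)` and `A*_i = {x*_i, …, x*_n}` (so `A*_{n+1} = ∅` and `μ ∅ = 0`). -/
noncomputable def choquet {X : Type*} [Fintype X] (μ : Set X → ℝ) (f : X → ℝ) : ℝ :=
  let e : Fin (Fintype.card X) ≃ X := (Fintype.equivFin X).symm
  let σ : Equiv.Perm (Fin (Fintype.card X)) := Tuple.sort (f ∘ e)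
  ∑ i : Fin (Fintype.card X),
    f (e (σ i)) * (μ {x | ∃ j, i ≤ j ∧ e (σ j) = x} - μ {x | ∃ j, i < j ∧ e (σ j) = x})

/-!
Sort `X` so that `f` increases along the enumeration `x*`. As `Φ` is non-decreasing, `Φ ∘ f`
increases along the same enumeration, and a Choquet sum does not depend on which sorting
enumeration is used: by summation by parts it only sees the sorted values and the measures of
the level sets `{x | c ≤ g x}`. Both integrals are therefore averages against the same weights
`μ(A*_i) − μ(A*_{i+1})`, which are non-negative and sum to `μ X − μ ∅ = 1`, and the inequality is
Jensen's inequality for the concave function `Φ`.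
-/

open Finset

theorem Fin.sum_mul_sub_succ_eq_by_parts {R : Type*} [CommRing R] {m : ℕ}
    (w : Fin (m + 1) → R) (a : ℕ → R) :
    ∑ i, w i * (a i - a (i + 1)) =
      w 0 * a 0 + ∑ i : Fin m, (w i.succ - w i.castSucc) * a (i + 1)
        - w (Fin.last m) * a (m + 1) := by
  simp only [mul_sub, sub_mul, sum_sub_distrib]
  rw [Fin.sum_univ_succ (fun i => w i * a i), Fin.sum_univ_castSucc (fun i => w i * a (i + 1))]
  simp only [Fin.val_succ, Fin.val_castSucc, Fin.val_last, Fin.val_zero]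
  ring

section ChoquetSum

variable {X : Type*} {n : ℕ}

/-- With `0`-based indices, `tailSet v k` is the set `A*_{k+1}` of the Choquet integral. -/
def tailSet (v : Fin n → X) (k : ℕ) : Set X :=
  {x | ∃ j : Fin n, k ≤ (j : ℕ) ∧ v j = x}

theorem tailSet_zero (v : Fin n ≃ X) : tailSet v 0 = Set.univ :=
  Set.eq_univ_of_forall fun x => ⟨v.symm x, Nat.zero_le _, v.apply_symm_apply x⟩

theorem tailSet_eq_empty (v : Fin n → X) {k : ℕ} (hk : n ≤ k) : tailSet v k = ∅ :=
  Set.eq_empty_of_forall_notMem fun _ ⟨j, hj, _⟩ => absurd (j.isLt.trans_le hk) (by omega)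

theorem tailSet_succ_subset (v : Fin n → X) (k : ℕ) : tailSet v (k + 1) ⊆ tailSet v k :=
  fun _ ⟨j, hj, hx⟩ => ⟨j, (Nat.le_succ k).trans hj, hx⟩

theorem tailSet_eq_setOf_le (g : X → ℝ) (v : Fin n ≃ X) (hg : Monotone (g ∘ v))
    {i j : Fin n} (hji : (j : ℕ) + 1 = i) (hlt : g (v j) < g (v i)) :
    tailSet v i = {x | g (v i) ≤ g x} := by
  ext x
  obtain ⟨l, rfl⟩ := v.surjective x
  constructor
  · rintro ⟨l', hl', hx⟩
    rw [← hx]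
    exact hg (Fin.le_iff_val_le_val.mpr hl')
  · intro hx
    refine ⟨l, ?_, rfl⟩
    by_contra! hli
    have hlj : l ≤ j := Fin.le_iff_val_le_val.mpr (by omega)
    exact absurd (hx.trans (hg hlj)) hlt.not_ge

def choquetWeight (μ : Set X → ℝ) (v : Fin n → X) (i : Fin n) : ℝ :=
  μ (tailSet v i) - μ (tailSet v (i + 1))

def choquetSum (μ : Set X → ℝ) (g : X → ℝ) (v : Fin n → X) : ℝ :=
  ∑ i, g (v i) * choquetWeight μ v i

theorem choquet_eq_choquetSum [Fintype X] (μ : Set X → ℝ) (g : X → ℝ) :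
    choquet μ g = choquetSum μ g
      ((Tuple.sort (g ∘ (Fintype.equivFin X).symm)).trans (Fintype.equivFin X).symm) :=
  rfl

theorem sum_choquetWeight (μ : Set X → ℝ) (v : Fin n ≃ X) :
    ∑ i, choquetWeight μ v i = μ Set.univ - μ ∅ := by
  rw [← tailSet_zero v, ← tailSet_eq_empty v le_rfl]
  exact (Fin.sum_univ_eq_sum_range (fun k => μ (tailSet v k) - μ (tailSet v (k + 1))) n).trans
    (sum_range_sub' _ n)

theorem choquetSum_eq_layerCake (μ : Set X → ℝ) (g : X → ℝ) {m : ℕ} (v : Fin (m + 1) ≃ X)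
    (hg : Monotone (g ∘ v)) :
    choquetSum μ g v =
      g (v 0) * μ Set.univ
        + ∑ i : Fin m, (g (v i.succ) - g (v i.castSucc)) * μ {x | g (v i.succ) ≤ g x}
        - g (v (Fin.last m)) * μ ∅ := by
  rw [choquetSum, ← tailSet_zero v, ← tailSet_eq_empty v le_rfl]
  refine (Fin.sum_mul_sub_succ_eq_by_parts (fun i => g (v i)) (fun k => μ (tailSet v k))).trans ?_
  congr 2
  refine sum_congr rfl fun i _ => ?_
  rcases (hg (Fin.castSucc_le_succ i)).eq_or_lt with heq | hlt
  · simp only [Function.comp_apply] at heq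
    rw [heq, sub_self, zero_mul, zero_mul]
  · rw [← tailSet_eq_setOf_le g v hg (by simp) hlt, Fin.val_succ]

theorem choquetSum_eq_of_monotone (μ : Set X → ℝ) (g : X → ℝ) {v v' : Fin n ≃ X}
    (hv : Monotone (g ∘ v)) (hv' : Monotone (g ∘ v')) :
    choquetSum μ g v = choquetSum μ g v' := by
  have hsorted : g ∘ v = g ∘ v' := by
    simpa [Function.comp_def] using
      Tuple.unique_monotone (f := g ∘ v) (σ := 1) (τ := v'.trans v.symm) hv
        (by simpa [Function.comp_def] using hv')
  cases n with
  | zero => simp [choquetSum]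
  | succ m =>
    have hvalues (i : Fin (m + 1)) : g (v i) = g (v' i) := congrFun hsorted i
    simp only [choquetSum_eq_layerCake μ g v hv, choquetSum_eq_layerCake μ g v' hv', hvalues]

theorem IsMonotoneMeasure.choquetWeight_nonneg {μ : Set X → ℝ} (hμ : IsMonotoneMeasure μ)
    (v : Fin n → X) (i : Fin n) : 0 ≤ choquetWeight μ v i :=
  sub_nonneg.mpr (hμ.mono _ _ (tailSet_succ_subset v i))

theorem ConcaveOn.choquetSum_comp_le {μ : Set X → ℝ} (hμ : IsMonotoneMeasure μ) (v : Fin n ≃ X)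
    {s : Set ℝ} {Φ : ℝ → ℝ} (hΦ : ConcaveOn ℝ s Φ) {f : X → ℝ} (hf : ∀ x, f x ∈ s) :
    choquetSum μ (Φ ∘ f) v ≤ Φ (choquetSum μ f v) := by
  have hweights : ∑ i, choquetWeight μ v i = 1 := by
    rw [sum_choquetWeight, hμ.univ, hμ.empty, sub_zero]
  simpa only [choquetSum, smul_eq_mul, mul_comm, Function.comp_apply] using
    hΦ.le_map_sum (fun i _ => hμ.choquetWeight_nonneg v i) hweights fun i _ => hf (v i)

end ChoquetSum

theorem stmt2_general {X : Type*} [Fintype X]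
    (μ : Set X → ℝ) (hμ : IsMonotoneMeasure μ)
    (f : X → ℝ) (hf : ∀ x, 0 ≤ f x)
    (Φ : ℝ → ℝ)
    (hΦmono : ∀ x y : ℝ, 0 ≤ x → x ≤ y → Φ x ≤ Φ y)
    (hΦconc : ConcaveOn ℝ (Set.Ici (0:ℝ)) Φ) :
    choquet μ (fun x => Φ (f x)) ≤ Φ (choquet μ f) := by
  set v := (Tuple.sort (f ∘ (Fintype.equivFin X).symm)).trans (Fintype.equivFin X).symm
  have hfv : Monotone (f ∘ v) := Tuple.monotone_sort (f ∘ (Fintype.equivFin X).symm)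
  have hΦfv : Monotone ((Φ ∘ f) ∘ v) := fun i j hij => hΦmono _ _ (hf _) (hfv hij)
  calc choquet μ (Φ ∘ f)
      = choquetSum μ (Φ ∘ f) v :=
        (choquet_eq_choquetSum μ _).trans (choquetSum_eq_of_monotone μ _
          (Tuple.monotone_sort ((Φ ∘ f) ∘ (Fintype.equivFin X).symm)) hΦfv)
    _ ≤ Φ (choquetSum μ f v) := hΦconc.choquetSum_comp_le hμ v hf
    _ = Φ (choquet μ f) := rfl

/-- Jensen's inequality for Choquet integrals, concave case. -/
theorem stmt2 {X : Type*} [Fintype X] [Nonempty X]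
    (μ : Set X → ℝ) (hμ : IsMonotoneMeasure μ)
    (f : X → ℝ) (hf : ∀ x, 0 ≤ f x)
    (Φ : ℝ → ℝ) (hΦnn : ∀ x : ℝ, 0 ≤ x → 0 ≤ Φ x)
    (hΦmono : ∀ x y : ℝ, 0 ≤ x → x ≤ y → Φ x ≤ Φ y)
    (hΦconc : ConcaveOn ℝ (Set.Ici (0:ℝ)) Φ) :
    choquet μ (fun x => Φ (f x)) ≤ Φ (choquet μ f) :=
  stmt2_general μ hμ f hf Φ hΦmono hΦconc
end

section
/- Let T be a D-convex left-continuous t-norm, μ a monotone measure on a finite nonempty set X, and R a T-equivalence relation on X. For every fuzzy set A on X, the Choquet upper approximation U(y) = ∫ T(R(x,y), A(x)) dμ(x) is a fixed point of the classical upper approximation: max_{x∈X} T(R(x,y), U(x)) = U(y) for every y ∈ X. -/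
structure IsTNorm (T : ℝ → ℝ → ℝ) : Prop where
  maps_to : ∀ x ∈ Set.Icc (0:ℝ) 1, ∀ y ∈ Set.Icc (0:ℝ) 1, T x y ∈ Set.Icc (0:ℝ) 1
  comm : ∀ x ∈ Set.Icc (0:ℝ) 1, ∀ y ∈ Set.Icc (0:ℝ) 1, T x y = T y x
  assoc : ∀ x ∈ Set.Icc (0:ℝ) 1, ∀ y ∈ Set.Icc (0:ℝ) 1, ∀ z ∈ Set.Icc (0:ℝ) 1,
      T (T x y) z = T x (T y z)
  mono : ∀ x₁ ∈ Set.Icc (0:ℝ) 1, ∀ x₂ ∈ Set.Icc (0:ℝ) 1, ∀ y₁ ∈ Set.Icc (0:ℝ) 1,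
      ∀ y₂ ∈ Set.Icc (0:ℝ) 1, x₁ ≤ x₂ → y₁ ≤ y₂ → T x₁ y₁ ≤ T x₂ y₂
  one_left : ∀ x ∈ Set.Icc (0:ℝ) 1, T 1 x = x

/-- `T` is left-continuous: it commutes with suprema of nonempty subsets of `[0,1]`
in each (equivalently, by commutativity, the second) argument. -/
def LeftContinuousTNorm (T : ℝ → ℝ → ℝ) : Prop :=
  ∀ x ∈ Set.Icc (0:ℝ) 1, ∀ S : Set ℝ, S.Nonempty → S ⊆ Set.Icc (0:ℝ) 1 →
    T x (sSup S) = sSup (T x '' S)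

/-- The residual implicator of `T`: `I(x,y) = sup {λ ∈ [0,1] | T(x,λ) ≤ y}`. -/
noncomputable def resid (T : ℝ → ℝ → ℝ) (x y : ℝ) : ℝ :=
  sSup {l | l ∈ Set.Icc (0:ℝ) 1 ∧ T x l ≤ y}

/-- `T` is D-convex: convex in each argument separately on `[0,1]`. -/
def DConvex (T : ℝ → ℝ → ℝ) : Prop :=
  ∀ a ∈ Set.Icc (0:ℝ) 1, ∀ b ∈ Set.Icc (0:ℝ) 1, ∀ y ∈ Set.Icc (0:ℝ) 1, ∀ w ∈ Set.Icc (0:ℝ) 1,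
    T (w * a + (1 - w) * b) y ≤ w * T a y + (1 - w) * T b y ∧
    T y (w * a + (1 - w) * b) ≤ w * T y a + (1 - w) * T y b

/-- `R` is a `T`-equivalence relation: a `[0,1]`-valued reflexive, symmetric and
`T`-transitive fuzzy relation. -/
structure IsTEquiv {X : Type*} (T : ℝ → ℝ → ℝ) (R : X → X → ℝ) : Prop where
  mem : ∀ x y, R x y ∈ Set.Icc (0:ℝ) 1
  refl : ∀ x, R x x = 1
  symm : ∀ x y, R x y = R y x
  trans : ∀ x y z, T (R x y) (R y z) ≤ R x z

/-!
For `[0,1]`-valued `f`, the Choquet sum taken along *any* enumeration `p` of `X` with `f ∘ p`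
monotone equals the layer-cake integral `∫₀¹ μ {t ≤ f} dt`. Hence the Choquet integral is
monotone in `f`, and for a monotone `φ` the weights `μ(A*ᵢ) - μ(A*ᵢ₊₁)` that compute `∫ f dμ`
also compute `∫ φ ∘ f dμ`. These weights are nonnegative and sum to `1`, so Jensen's inequality
gives `φ (∫ f dμ) ≤ ∫ φ ∘ f dμ` for monotone convex `φ`. Taking `φ = T (R x y)` and then using
`T`-transitivity of `R` yields `T (R x y) (U x) ≤ U y`; the term `x = y` attains `U y`.
-/

open Set MeasureTheory

section Choquet

variable {X : Type*} {μ : Set X → ℝ} {n : ℕ}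

def enumTail (p : Fin n → X) (k : ℕ) : Set X :=
  {x | ∃ j : Fin n, k ≤ (j : ℕ) ∧ p j = x}

lemma enumTail_succ_subset (p : Fin n → X) (k : ℕ) : enumTail p (k + 1) ⊆ enumTail p k :=
  fun _ ⟨j, hj, hx⟩ => ⟨j, by omega, hx⟩

lemma enumTail_zero {p : Fin n → X} (hp : Function.Surjective p) : enumTail p 0 = univ :=
  eq_univ_of_forall fun x => (hp x).elim fun j hj => ⟨j, Nat.zero_le _, hj⟩

lemma enumTail_self (p : Fin n → X) : enumTail p n = ∅ :=
  eq_empty_of_forall_notMem fun _ ⟨j, hj, _⟩ => by omega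

lemma sum_measure_inter_enumTail_sub {p : Fin n → X} (hp : Function.Surjective p) (S : Set X) :
    ∑ i : Fin n, (μ (S ∩ enumTail p i) - μ (S ∩ enumTail p (i + 1))) = μ S - μ ∅ := by
  rw [Fin.sum_univ_eq_sum_range (fun k => μ (S ∩ enumTail p k) - μ (S ∩ enumTail p (k + 1))),
    Finset.sum_range_sub', enumTail_zero hp, enumTail_self, inter_univ, inter_empty]

def enumWeight (μ : Set X → ℝ) (p : Fin n → X) (i : Fin n) : ℝ :=
  μ (enumTail p i) - μ (enumTail p (i + 1))

lemma enumWeight_nonneg (hμ : IsMonotoneMeasure μ) (p : Fin n → X) (i : Fin n) :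
    0 ≤ enumWeight μ p i :=
  sub_nonneg.mpr (hμ.mono _ _ (enumTail_succ_subset p i))

lemma sum_enumWeight (hμ : IsMonotoneMeasure μ) {p : Fin n → X} (hp : Function.Surjective p) :
    ∑ i, enumWeight μ p i = 1 := by
  simpa only [enumWeight, univ_inter, hμ.univ, hμ.empty, sub_zero] using
    sum_measure_inter_enumTail_sub (μ := μ) hp univ

lemma indicator_enumWeight_eq {p : Fin n → X} {f : X → ℝ} (hfp : Monotone (f ∘ p)) (t : ℝ)
    (i : Fin n) :
    (Iic (f (p i))).indicator (fun _ => enumWeight μ p i) t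
      = μ ({x | t ≤ f x} ∩ enumTail p i) - μ ({x | t ≤ f x} ∩ enumTail p (i + 1)) := by
  by_cases ht : t ≤ f (p i)
  · have hsub : ∀ k, (i : ℕ) ≤ k → enumTail p k ⊆ {x | t ≤ f x} := by
      rintro k hk _ ⟨j, hj, rfl⟩
      exact ht.trans (hfp (show i ≤ j from Fin.le_def.mpr (hk.trans hj)))
    rw [indicator_of_mem (mem_Iic.mpr ht), enumWeight, inter_eq_right.mpr (hsub _ le_rfl),
      inter_eq_right.mpr (hsub _ (Nat.le_succ _))]
  · have hinter : {x | t ≤ f x} ∩ enumTail p i = {x | t ≤ f x} ∩ enumTail p (i + 1) := by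
      refine Subset.antisymm ?_ (inter_subset_inter_right _ (enumTail_succ_subset p i))
      rintro _ ⟨hx, j, hj, rfl⟩
      have hij : (i : ℕ) ≠ j := fun h => ht (by rwa [Fin.ext h])
      exact ⟨hx, j, by omega, rfl⟩
    rw [indicator_of_notMem (notMem_Iic.mpr (not_le.mp ht)), hinter, sub_self]

lemma intervalIntegral_indicator_Iic (a c : ℝ) (ha : a ∈ Icc (0:ℝ) 1) :
    ∫ t in (0:ℝ)..1, (Iic a).indicator (fun _ => c) t = a * c := by
  rw [intervalIntegral.integral_of_le zero_le_one, integral_indicator_const _ measurableSet_Iic,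
    Measure.real, Measure.restrict_apply measurableSet_Iic, Iic_inter_Ioc_of_le ha.2,
    Real.volume_Ioc, ENNReal.toReal_ofReal (by linarith [ha.1]), sub_zero, smul_eq_mul]

lemma intervalIntegrable_indicator_Iic (a c : ℝ) :
    IntervalIntegrable ((Iic a).indicator fun _ => c) volume 0 1 :=
  ⟨intervalIntegrable_const.1.indicator measurableSet_Iic,
    intervalIntegrable_const.2.indicator measurableSet_Iic⟩

theorem sum_enumWeight_mul_eq_layerCake (hμ : μ ∅ = 0) {p : Fin n → X}
    (hp : Function.Surjective p) {f : X → ℝ} (hf : ∀ x, f x ∈ Icc (0:ℝ) 1)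
    (hfp : Monotone (f ∘ p)) :
    ∑ i, enumWeight μ p i * f (p i) = ∫ t in (0:ℝ)..1, μ {x | t ≤ f x} := by
  -- for fixed `t`, the superlevel set `{t ≤ f}` telescopes along the tails of `p`
  have hlevel : ∀ t, μ {x | t ≤ f x}
      = ∑ i, (Iic (f (p i))).indicator (fun _ => enumWeight μ p i) t := fun t => by
    simp_rw [indicator_enumWeight_eq hfp, sum_measure_inter_enumTail_sub hp, hμ, sub_zero]
  simp_rw [hlevel]
  rw [intervalIntegral.integral_finsetSum fun i _ => intervalIntegrable_indicator_Iic _ _]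
  exact Finset.sum_congr rfl fun i _ => by rw [intervalIntegral_indicator_Iic _ _ (hf _), mul_comm]

lemma antitone_measure_superlevel (hμ : IsMonotoneMeasure μ) (f : X → ℝ) :
    Antitone fun t => μ {x | t ≤ f x} :=
  fun _ _ hst => hμ.mono _ _ fun _ hx => hst.trans hx

variable [Fintype X]

noncomputable def sortingEnum (f : X → ℝ) : Fin (Fintype.card X) → X :=
  fun j => (Fintype.equivFin X).symm (Tuple.sort (f ∘ (Fintype.equivFin X).symm) j)

lemma sortingEnum_surjective (f : X → ℝ) : Function.Surjective (sortingEnum f) :=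
  fun x => ⟨(Tuple.sort (f ∘ (Fintype.equivFin X).symm)).symm (Fintype.equivFin X x),
    by simp [sortingEnum]⟩

lemma monotone_comp_sortingEnum (f : X → ℝ) : Monotone (f ∘ sortingEnum f) :=
  Tuple.monotone_sort (f ∘ (Fintype.equivFin X).symm)

lemma choquet_eq_sum (f : X → ℝ) :
    choquet μ f = ∑ i, enumWeight μ (sortingEnum f) i * f (sortingEnum f i) :=
  Finset.sum_congr rfl fun _ _ => mul_comm _ _

theorem choquet_eq_layerCake (hμ : μ ∅ = 0) {f : X → ℝ} (hf : ∀ x, f x ∈ Icc (0:ℝ) 1) :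
    choquet μ f = ∫ t in (0:ℝ)..1, μ {x | t ≤ f x} := by
  rw [choquet_eq_sum]
  exact sum_enumWeight_mul_eq_layerCake hμ (sortingEnum_surjective f) hf
    (monotone_comp_sortingEnum f)

theorem choquet_mono (hμ : IsMonotoneMeasure μ) {f g : X → ℝ} (hf : ∀ x, f x ∈ Icc (0:ℝ) 1)
    (hg : ∀ x, g x ∈ Icc (0:ℝ) 1) (hfg : ∀ x, f x ≤ g x) :
    choquet μ f ≤ choquet μ g := by
  rw [choquet_eq_layerCake hμ.empty hf, choquet_eq_layerCake hμ.empty hg]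
  exact intervalIntegral.integral_mono_on zero_le_one
    (antitone_measure_superlevel hμ f).intervalIntegrable
    (antitone_measure_superlevel hμ g).intervalIntegrable
    fun _ _ => hμ.mono _ _ fun x hx => le_trans hx (hfg x)

theorem choquet_mem_Icc (hμ : IsMonotoneMeasure μ) {f : X → ℝ}
    (hf : ∀ x, f x ∈ Icc (0:ℝ) 1) : choquet μ f ∈ Icc (0:ℝ) 1 := by
  rw [choquet_eq_sum]
  have hw := enumWeight_nonneg hμ (sortingEnum f)
  refine ⟨Finset.sum_nonneg fun i _ => mul_nonneg (hw i) (hf _).1, ?_⟩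
  calc ∑ i, enumWeight μ (sortingEnum f) i * f (sortingEnum f i)
      ≤ ∑ i, enumWeight μ (sortingEnum f) i :=
        Finset.sum_le_sum fun i _ => mul_le_of_le_one_right (hw i) (hf _).2
    _ = 1 := sum_enumWeight hμ (sortingEnum_surjective f)

theorem ConvexOn.map_choquet_le (hμ : IsMonotoneMeasure μ) {φ : ℝ → ℝ}
    (hφ : ConvexOn ℝ (Icc 0 1) φ) (hφ_mono : MonotoneOn φ (Icc 0 1))
    (hφ_maps : MapsTo φ (Icc 0 1) (Icc 0 1)) {f : X → ℝ} (hf : ∀ x, f x ∈ Icc (0:ℝ) 1) :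
    φ (choquet μ f) ≤ choquet μ (φ ∘ f) := by
  set p := sortingEnum f
  have hφf : ∀ x, (φ ∘ f) x ∈ Icc (0:ℝ) 1 := fun x => hφ_maps (hf x)
  calc φ (choquet μ f) = φ (∑ i, enumWeight μ p i • f (p i)) := by rw [choquet_eq_sum]; rfl
    _ ≤ ∑ i, enumWeight μ p i • φ (f (p i)) :=
        hφ.map_sum_le (fun i _ => enumWeight_nonneg hμ p i)
          (sum_enumWeight hμ (sortingEnum_surjective f)) fun i _ => hf _
    _ = ∫ t in (0:ℝ)..1, μ {x | t ≤ (φ ∘ f) x} :=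
        sum_enumWeight_mul_eq_layerCake hμ.empty (sortingEnum_surjective f) hφf
          fun _ _ hij => hφ_mono (hf _) (hf _) (monotone_comp_sortingEnum f hij)
    _ = choquet μ (φ ∘ f) := (choquet_eq_layerCake hμ.empty hφf).symm

end Choquet
section TNorm

variable {T : ℝ → ℝ → ℝ} {c : ℝ}

lemma DConvex.convexOn_right (hT : DConvex T) (hc : c ∈ Icc (0:ℝ) 1) :
    ConvexOn ℝ (Icc 0 1) (T c) := by
  refine ⟨convex_Icc 0 1, fun a ha b hb u v hu hv huv => ?_⟩
  obtain rfl : v = 1 - u := by linarith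
  exact (hT a ha b hb c hc u ⟨hu, by linarith⟩).2

lemma IsTNorm.monotoneOn_right (hT : IsTNorm T) (hc : c ∈ Icc (0:ℝ) 1) :
    MonotoneOn (T c) (Icc 0 1) :=
  fun _ ha _ hb hab => hT.mono c hc c hc _ ha _ hb le_rfl hab

lemma IsTNorm.mapsTo_right (hT : IsTNorm T) (hc : c ∈ Icc (0:ℝ) 1) :
    MapsTo (T c) (Icc 0 1) (Icc 0 1) :=
  fun _ ha => hT.maps_to c hc _ ha

lemma IsTEquiv.tnorm_tnorm_le {X : Type*} {R : X → X → ℝ} (hT : IsTNorm T) (hR : IsTEquiv T R)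
    {a : ℝ} (ha : a ∈ Icc (0:ℝ) 1) (x y z : X) :
    T (R y z) (T (R x y) a) ≤ T (R x z) a := by
  rw [← hT.assoc _ (hR.mem y z) _ (hR.mem x y) _ ha, hT.comm _ (hR.mem y z) _ (hR.mem x y)]
  exact hT.mono _ (hT.maps_to _ (hR.mem x y) _ (hR.mem y z)) _ (hR.mem x z) _ ha _ ha
    (hR.trans x y z) le_rfl

end TNorm

theorem stmt6_general {X : Type*} [Fintype X] [Nonempty X]
    (T : ℝ → ℝ → ℝ) (hT : IsTNorm T) (hTconv : DConvex T)
    (μ : Set X → ℝ) (hμ : IsMonotoneMeasure μ)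
    (R : X → X → ℝ) (hR : IsTEquiv T R)
    (A : X → ℝ) (hA : ∀ x, A x ∈ Set.Icc (0:ℝ) 1) :
    ∀ y : X,
      Finset.univ.sup' Finset.univ_nonempty
          (fun x => T (R x y) (choquet μ (fun x' => T (R x' x) (A x'))))
        = choquet μ (fun x' => T (R x' y) (A x')) := by
  intro y
  have hRA : ∀ z x', T (R x' z) (A x') ∈ Icc (0:ℝ) 1 :=
    fun z x' => hT.maps_to _ (hR.mem x' z) _ (hA x')
  refine le_antisymm (Finset.sup'_le _ _ fun x _ => ?_) ?_
  · have hc := hR.mem x y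
    calc T (R x y) (choquet μ fun x' => T (R x' x) (A x'))
        ≤ choquet μ (fun x' => T (R x y) (T (R x' x) (A x'))) :=
          (hTconv.convexOn_right hc).map_choquet_le hμ (hT.monotoneOn_right hc)
            (hT.mapsTo_right hc) (hRA x)
      _ ≤ choquet μ fun x' => T (R x' y) (A x') :=
          choquet_mono hμ (fun x' => hT.maps_to _ hc _ (hRA x x')) (hRA y)
            fun x' => hR.tnorm_tnorm_le hT (hA x') x' x y
  · calc choquet μ (fun x' => T (R x' y) (A x'))
        = T (R y y) (choquet μ fun x' => T (R x' y) (A x')) := by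
          rw [hR.refl, hT.one_left _ (choquet_mem_Icc hμ (hRA y))]
      _ ≤ _ := Finset.le_sup' (fun x => T (R x y) (choquet μ fun x' => T (R x' x) (A x')))
          (Finset.mem_univ y)

/-- the Choquet upper approximation is a fixed point of the classical
upper approximation. -/
theorem stmt6 {X : Type*} [Fintype X] [Nonempty X]
    (T : ℝ → ℝ → ℝ) (hT : IsTNorm T) (hTlc : LeftContinuousTNorm T) (hTconv : DConvex T)
    (μ : Set X → ℝ) (hμ : IsMonotoneMeasure μ)
    (R : X → X → ℝ) (hR : IsTEquiv T R)
    (A : X → ℝ) (hA : ∀ x, A x ∈ Set.Icc (0:ℝ) 1) :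
    ∀ y : X,
      Finset.univ.sup' Finset.univ_nonempty
          (fun x => T (R x y) (choquet μ (fun x' => T (R x' x) (A x'))))
        = choquet μ (fun x' => T (R x' y) (A x')) :=
  stmt6_general T hT hTconv μ hμ R hR A hA
end

section
/- (Jensen's inequality for Sugeno integrals, contractive case.) Let μ be a monotone measure on a finite nonempty set X, f : X → [0,∞), and Φ : [0,∞) → [0,∞) a non-decreasing function with Φ(x) ≤ x for every x ∈ [0,1]. Then Φ(⨍ f dμ) ≤ ⨍ (Φ ∘ f) dμ, where both integrals are Sugeno integrals w.r.t. μ. -/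
/-- The Sugeno integral of `f : X → ℝ` w.r.t. `μ` on the finite nonempty set `X`:
`max_i min(μ(A*_i), f(x*_i))` where `x*` enumerates `X` with
`f(x*_1) ≤ … ≤ f(x*_n)` and `A*_i = {x*_i, …, x*_n}`. -/
noncomputable def sugeno {X : Type*} [Fintype X] [Nonempty X] (μ : Set X → ℝ) (f : X → ℝ) : ℝ :=
  let e : Fin (Fintype.card X) ≃ X := (Fintype.equivFin X).symm
  let σ : Equiv.Perm (Fin (Fintype.card X)) := Tuple.sort (f ∘ e)
  haveI : Nonempty (Fin (Fintype.card X)) := Fin.pos_iff_nonempty.mp Fintype.card_pos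
  Finset.univ.sup' Finset.univ_nonempty
    (fun i => min (μ {x | ∃ j, i ≤ j ∧ e (σ j) = x}) (f (e (σ i))))

/-! The Sugeno integral is `max_A min (μ A, min_A f)` over nonempty `A ⊆ X`: the sets `A*_i`
attain the maximum, and every other `A` is dominated by the `A*_i` with `x*_i` the first
point of `A` in the enumeration. Since `Φ` is monotone and contractive on `[0, 1] ∋ μ A`,
`Φ (min (μ A) t) ≤ min (μ A) (Φ t)`; applying this to a maximising `A` gives the inequality. -/

namespace IsMonotoneMeasure

variable {X : Type*} {μ : Set X → ℝ}

lemma nonneg (hμ : IsMonotoneMeasure μ) (A : Set X) : 0 ≤ μ A :=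
  hμ.empty ▸ hμ.mono _ _ (Set.empty_subset A)

lemma le_one (hμ : IsMonotoneMeasure μ) (A : Set X) : μ A ≤ 1 :=
  hμ.univ ▸ hμ.mono _ _ (Set.subset_univ A)

end IsMonotoneMeasure

section Sugeno

variable {X : Type*} [Fintype X] [Nonempty X] {μ : Set X → ℝ}

lemma min_le_sugeno (hμ : IsMonotoneMeasure μ) (f : X → ℝ) {A : Set X} (hA : A.Nonempty)
    {t : ℝ} (ht : ∀ x ∈ A, t ≤ f x) : min (μ A) t ≤ sugeno μ f := by
  classical
  dsimp only [sugeno]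
  set e : Fin (Fintype.card X) ≃ X := (Fintype.equivFin X).symm
  set σ : Equiv.Perm (Fin (Fintype.card X)) := Tuple.sort (f ∘ e)
  set I := Finset.univ.filter (fun i => e (σ i) ∈ A)
  obtain ⟨x₀, hx₀⟩ := hA
  have hI : I.Nonempty := ⟨σ.symm (e.symm x₀), by simp [I, hx₀]⟩
  have hfirst : e (σ (I.min' hI)) ∈ A := (Finset.mem_filter.mp (I.min'_mem hI)).2
  have hA_sub : A ⊆ {x | ∃ j, I.min' hI ≤ j ∧ e (σ j) = x} := fun x hx =>
    ⟨σ.symm (e.symm x), I.min'_le _ (by simp [I, hx]), by simp⟩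
  exact (min_le_min (hμ.mono _ _ hA_sub) (ht _ hfirst)).trans
    (Finset.le_sup' (fun i => min (μ {x | ∃ j, i ≤ j ∧ e (σ j) = x}) (f (e (σ i))))
      (Finset.mem_univ _))

lemma exists_min_eq_sugeno (μ : Set X → ℝ) (f : X → ℝ) :
    ∃ A : Set X, ∃ a ∈ A, (∀ x ∈ A, f a ≤ f x) ∧ sugeno μ f = min (μ A) (f a) := by
  dsimp only [sugeno]
  set e : Fin (Fintype.card X) ≃ X := (Fintype.equivFin X).symm
  set σ : Equiv.Perm (Fin (Fintype.card X)) := Tuple.sort (f ∘ e)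
  obtain ⟨i, -, hi⟩ := Finset.exists_mem_eq_sup' Finset.univ_nonempty
    (fun i => min (μ {x | ∃ j, i ≤ j ∧ e (σ j) = x}) (f (e (σ i))))
  refine ⟨{x | ∃ j, i ≤ j ∧ e (σ j) = x}, e (σ i), ⟨i, le_rfl, rfl⟩, ?_, hi⟩
  rintro _ ⟨j, hij, rfl⟩
  exact Tuple.monotone_sort (f ∘ e) hij

end Sugeno

lemma map_min_le_min_of_le_self {Φ : ℝ → ℝ} (hΦmono : MonotoneOn Φ (Set.Ici 0))
    (hΦcon : ∀ x ∈ Set.Icc (0:ℝ) 1, Φ x ≤ x) {a b : ℝ} (ha : a ∈ Set.Icc (0:ℝ) 1)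
    (hb : 0 ≤ b) : Φ (min a b) ≤ min a (Φ b) := by
  have hmin : (0:ℝ) ≤ min a b := le_min ha.1 hb
  refine le_min ?_ ?_
  · exact (hΦmono hmin ha.1 (min_le_left a b)).trans (hΦcon a ha)
  · exact hΦmono hmin hb (min_le_right a b)

theorem stmt9_general {X : Type*} [Fintype X] [Nonempty X]
    (μ : Set X → ℝ) (hμ : IsMonotoneMeasure μ)
    (f : X → ℝ) (hf : ∀ x, 0 ≤ f x)
    (Φ : ℝ → ℝ)
    (hΦmono : ∀ x y : ℝ, 0 ≤ x → x ≤ y → Φ x ≤ Φ y)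
    (hΦcon : ∀ x ∈ Set.Icc (0:ℝ) 1, Φ x ≤ x) :
    Φ (sugeno μ f) ≤ sugeno μ (fun x => Φ (f x)) := by
  have hΦ : MonotoneOn Φ (Set.Ici 0) := fun x hx y _ hxy => hΦmono x y hx hxy
  obtain ⟨A, a, ha, ha_min, hsugeno⟩ := exists_min_eq_sugeno μ f
  calc Φ (sugeno μ f) ≤ min (μ A) (Φ (f a)) := by
        rw [hsugeno]
        exact map_min_le_min_of_le_self hΦ hΦcon ⟨hμ.nonneg A, hμ.le_one A⟩ (hf a)
    _ ≤ sugeno μ (fun x => Φ (f x)) :=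
        min_le_sugeno hμ _ ⟨a, ha⟩ fun x hx => hΦmono _ _ (hf a) (ha_min x hx)

/-- Jensen's inequality for Sugeno integrals, contractive case. -/
theorem stmt9 {X : Type*} [Fintype X] [Nonempty X]
    (μ : Set X → ℝ) (hμ : IsMonotoneMeasure μ)
    (f : X → ℝ) (hf : ∀ x, 0 ≤ f x)
    (Φ : ℝ → ℝ) (hΦnn : ∀ x : ℝ, 0 ≤ x → 0 ≤ Φ x)
    (hΦmono : ∀ x y : ℝ, 0 ≤ x → x ≤ y → Φ x ≤ Φ y)
    (hΦcon : ∀ x ∈ Set.Icc (0:ℝ) 1, Φ x ≤ x) :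
    Φ (sugeno μ f) ≤ sugeno μ (fun x => Φ (f x)) :=
  stmt9_general μ hμ f hf Φ hΦmono hΦcon
end

section
/- Let T be a left-continuous t-norm and R a T-equivalence relation on a finite nonempty set X. A fuzzy set A on X is granularly representable w.r.t. R if and only if it satisfies the consistency property: T(R(x,y), A(y)) ≤ A(x) for all x, y ∈ X. -/
/-- `A` is granularly representable w.r.t. `T` and `R`: for every `y`,
`A(y)` is the supremum of the values `T(λ, R(x,y))` over all granules
`R_λ(x) = (z ↦ T(λ, R(x,z)))` that are (pointwise) contained in `A`. -/
def GranRep {X : Type*} (T : ℝ → ℝ → ℝ) (R : X → X → ℝ) (A : X → ℝ) : Prop :=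
  ∀ y, A y = sSup {v | ∃ l ∈ Set.Icc (0:ℝ) 1, ∃ x, (∀ z, T l (R x z) ≤ A z) ∧ v = T l (R x y)}


/-!
Every granule `z ↦ T(λ, R(x,z))` is consistent, by `T`-transitivity of `R`; since `T(r, ·)`
commutes with suprema (left-continuity), a supremum of granules is consistent too. Conversely,
if `A` is consistent, the granule `R_{A(y)}(y)` is contained in `A` and takes the value `A(y)`
at `y`, so `A` is the union of its granules.
-/

namespace IsTNorm

variable {T : ℝ → ℝ → ℝ} (hT : IsTNorm T)
include hT

theorem one_right {x : ℝ} (hx : x ∈ Set.Icc (0:ℝ) 1) : T x 1 = x := by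
  rw [hT.comm x hx 1 ⟨zero_le_one, le_rfl⟩, hT.one_left x hx]

theorem mono_right {x y₁ y₂ : ℝ} (hx : x ∈ Set.Icc (0:ℝ) 1) (hy₁ : y₁ ∈ Set.Icc (0:ℝ) 1)
    (hy₂ : y₂ ∈ Set.Icc (0:ℝ) 1) (h : y₁ ≤ y₂) : T x y₁ ≤ T x y₂ :=
  hT.mono x hx x hx y₁ hy₁ y₂ hy₂ le_rfl h

theorem zero_left {y : ℝ} (hy : y ∈ Set.Icc (0:ℝ) 1) : T 0 y = 0 := by
  have h0 : (0:ℝ) ∈ Set.Icc (0:ℝ) 1 := ⟨le_rfl, zero_le_one⟩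
  have h1 : (1:ℝ) ∈ Set.Icc (0:ℝ) 1 := ⟨zero_le_one, le_rfl⟩
  refine le_antisymm ?_ (hT.maps_to 0 h0 y hy).1
  calc T 0 y ≤ T 0 1 := hT.mono_right h0 hy h1 hy.2
    _ = 0 := hT.one_right h0

theorem left_comm {a b c : ℝ} (ha : a ∈ Set.Icc (0:ℝ) 1) (hb : b ∈ Set.Icc (0:ℝ) 1)
    (hc : c ∈ Set.Icc (0:ℝ) 1) : T a (T b c) = T b (T a c) := by
  rw [← hT.assoc a ha b hb c hc, hT.comm a ha b hb, hT.assoc b hb a ha c hc]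

end IsTNorm

section Granules

variable {X : Type*} {T : ℝ → ℝ → ℝ} {R : X → X → ℝ} {A : X → ℝ}

def granuleValues (T : ℝ → ℝ → ℝ) (R : X → X → ℝ) (A : X → ℝ) (y : X) : Set ℝ :=
  {v | ∃ l ∈ Set.Icc (0:ℝ) 1, ∃ x, (∀ z, T l (R x z) ≤ A z) ∧ v = T l (R x y)}

theorem granuleValues_subset_Icc (hT : IsTNorm T) (hR : IsTEquiv T R) (y : X) :
    granuleValues T R A y ⊆ Set.Icc (0:ℝ) 1 := by
  rintro v ⟨l, hl, x, -, rfl⟩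
  exact hT.maps_to l hl _ (hR.mem x y)

theorem granuleValues_nonempty (hT : IsTNorm T) (hR : IsTEquiv T R)
    (hA : ∀ x, A x ∈ Set.Icc (0:ℝ) 1) (y : X) : (granuleValues T R A y).Nonempty :=
  ⟨T 0 (R y y), 0, ⟨le_rfl, zero_le_one⟩, y,
    fun z => (hT.zero_left (hR.mem y z)).trans_le (hA z).1, rfl⟩

theorem sSup_granuleValues_le (hA : ∀ x, A x ∈ Set.Icc (0:ℝ) 1) (y : X) :
    sSup (granuleValues T R A y) ≤ A y :=
  Real.sSup_le (fun _ ⟨_, _, _, hle, hv⟩ => hv ▸ hle y) (hA y).1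

theorem granule_consistent (hT : IsTNorm T) (hR : IsTEquiv T R) {l : ℝ}
    (hl : l ∈ Set.Icc (0:ℝ) 1) (x y z : X) : T (R x y) (T l (R z y)) ≤ T l (R z x) := by
  have hxy := hR.mem x y
  have hzy := hR.mem z y
  have htrans : T (R x y) (R z y) ≤ R z x := by
    rw [hT.comm _ hxy _ hzy, hR.symm x y]
    exact hR.trans z y x
  rw [hT.left_comm hxy hl hzy]
  exact hT.mono_right hl (hT.maps_to _ hxy _ hzy) (hR.mem z x) htrans

theorem consistent_of_granRep (hT : IsTNorm T) (hTlc : LeftContinuousTNorm T)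
    (hR : IsTEquiv T R) (hA : ∀ x, A x ∈ Set.Icc (0:ℝ) 1) (hG : GranRep T R A) (x y : X) :
    T (R x y) (A y) ≤ A x := by
  have hsup : T (R x y) (A y) = sSup (T (R x y) '' granuleValues T R A y) := by
    rw [hG y]
    exact hTlc _ (hR.mem x y) _ (granuleValues_nonempty hT hR hA y)
      (granuleValues_subset_Icc hT hR y)
  rw [hsup]
  refine Real.sSup_le ?_ (hA x).1
  rintro _ ⟨_, ⟨l, hl, z, hgran, rfl⟩, rfl⟩
  exact (granule_consistent hT hR hl x y z).trans (hgran x)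

theorem self_mem_granuleValues (hT : IsTNorm T) (hR : IsTEquiv T R)
    (hA : ∀ x, A x ∈ Set.Icc (0:ℝ) 1) (hc : ∀ x y, T (R x y) (A y) ≤ A x) (y : X) :
    A y ∈ granuleValues T R A y := by
  refine ⟨A y, hA y, y, fun z => ?_, ?_⟩
  · rw [hT.comm _ (hA y) _ (hR.mem y z), ← hR.symm z y]
    exact hc z y
  · rw [hR.refl y, hT.one_right (hA y)]

theorem granRep_of_consistent (hT : IsTNorm T) (hR : IsTEquiv T R)
    (hA : ∀ x, A x ∈ Set.Icc (0:ℝ) 1) (hc : ∀ x y, T (R x y) (A y) ≤ A x) :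
    GranRep T R A := fun y =>
  le_antisymm
    (le_csSup ⟨1, fun _ hv => (granuleValues_subset_Icc hT hR y hv).2⟩
      (self_mem_granuleValues hT hR hA hc y))
    (sSup_granuleValues_le hA y)

end Granules

theorem stmt15_general {X : Type*}
    (T : ℝ → ℝ → ℝ) (hT : IsTNorm T) (hTlc : LeftContinuousTNorm T)
    (R : X → X → ℝ) (hR : IsTEquiv T R)
    (A : X → ℝ) (hA : ∀ x, A x ∈ Set.Icc (0:ℝ) 1) :
    GranRep T R A ↔ (∀ x y, T (R x y) (A y) ≤ A x) :=
  ⟨consistent_of_granRep hT hTlc hR hA, granRep_of_consistent hT hR hA⟩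

/-- `A` is granularly representable iff it satisfies the consistency property. -/
theorem stmt15 {X : Type*} [Fintype X] [Nonempty X]
    (T : ℝ → ℝ → ℝ) (hT : IsTNorm T) (hTlc : LeftContinuousTNorm T)
    (R : X → X → ℝ) (hR : IsTEquiv T R)
    (A : X → ℝ) (hA : ∀ x, A x ∈ Set.Icc (0:ℝ) 1) :
    GranRep T R A ↔ (∀ x y, T (R x y) (A y) ≤ A x) :=
  stmt15_general T hT hTlc R hR A hA
end

section
/- (Non-granularity of the YWIC lower approximation.) Let X = {x₁,…,x₅}, a = (1, 0.5, 1, 0, 0), R(x,y) = 1 − |a(x) − a(y)| (a T_L-equivalence relation), and A = (1, 1, 1, 0, 0). For y ∈ X let g_y(x) = I_L(R(x,y), A(x)) and define the YWIC lower approximation of A with identity RIM quantifier by L(y) = (Σ_{i=1}^{5} sᵢ(g_y)·t_{6−i}(R(·,y))) / (Σ_{x∈X} R(x,y)), where sᵢ(g_y) denotes the i-th smallest of the five values g_y(x) and t_j(R(·,y)) denotes the j-th smallest of the five values R(x,y). Then L = (1, 0.75, 1, 0.2, 0.2), while min_{x∈X} I_L(R(x,x₂), L(x)) = 0.7 ≠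 0.75 = L(x₂); hence L is not a fixed point of the classical lower approximation and in particular L is not granularly representable w.r.t. R. -/
/-!
If a granule `R_λ(z)` lies inside `A`, then `T_L`-transitivity of `R` gives
`T_L(λ, R(z,y)) ≤ I_L(R(x,y), A(x))` for all `x, y`; so every granularly representable set lies
below its classical lower approximation. The YWIC approximation `L` violates this at `x₂`,
where the lower approximation of `L` is `0.7 < 0.75 = L(x₂)`. The values of `L` are a finite
computation, each column being sorted by an explicit permutation.
-/

/-- The Łukasiewicz t-norm. -/
noncomputable def TL (x y : ℝ) : ℝ := max 0 (x + y - 1)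

/-- The Łukasiewicz (residual) implicator. -/
noncomputable def IL (x y : ℝ) : ℝ := min 1 (1 - x + y)

/-- `sortVal g i` is the (0-indexed) `i`-th smallest of the values of `g`. -/
noncomputable def sortVal {n : ℕ} (g : Fin n → ℝ) (i : Fin n) : ℝ := g (Tuple.sort g i)

open Finset

noncomputable def similarityOf {X : Type*} (a : X → ℝ) (x y : X) : ℝ := 1 - |a x - a y|

theorem isTEquiv_similarityOf {X : Type*} {a : X → ℝ} (ha : ∀ x, a x ∈ Set.Icc (0:ℝ) 1) :
    IsTEquiv TL (similarityOf a) where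
  mem x y := by
    have := ha x; have := ha y
    simp only [similarityOf, Set.mem_Icc] at *
    constructor <;> cases abs_cases (a x - a y) <;> linarith
  refl x := by simp [similarityOf]
  symm x y := by rw [similarityOf, similarityOf, abs_sub_comm]
  trans x y z := by
    have := abs_sub_le (a x) (a y) (a z)
    have := ha x; have := ha z
    simp only [TL, similarityOf, Set.mem_Icc] at *
    refine max_le ?_ (by linarith)
    cases abs_cases (a x - a z) <;> linarith

noncomputable def lowerApprox {X : Type*} [Fintype X] [Nonempty X] (R : X → X → ℝ) (A : X → ℝ)
    (y : X) : ℝ :=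
  univ.inf' univ_nonempty fun x => IL (R x y) (A x)

section Granules

variable {X : Type*} {R : X → X → ℝ} {A : X → ℝ}

theorem TL_granule_le_IL (hR : IsTEquiv TL R) (hA : ∀ x, 0 ≤ A x) {l : ℝ} (hl : l ≤ 1) {z : X}
    (hsub : ∀ w, TL l (R z w) ≤ A w) (x y : X) : TL l (R z y) ≤ IL (R x y) (A x) := by
  have hzyx : R z y + R x y - 1 ≤ R z x := by
    simpa only [TL, hR.symm y x] using (le_max_right _ _).trans (hR.trans z y x)
  have hzx : l + R z x - 1 ≤ A x := (le_max_right _ _).trans (hsub x)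
  have hzy := (hR.mem z y).2
  have hxy := (hR.mem x y).2
  have hAx := hA x
  unfold TL IL
  exact max_le (le_min zero_le_one (by linarith)) (le_min (by linarith) (by linarith))

theorem GranRep.le_lowerApprox [Fintype X] [Nonempty X] (hG : GranRep TL R A)
    (hR : IsTEquiv TL R) (hA : ∀ x, 0 ≤ A x) : A ≤ lowerApprox R A := by
  intro y
  rw [hG y]
  refine le_inf' _ _ fun x _ => Real.sSup_le ?_ ?_
  · rintro v ⟨l, hl, z, hsub, rfl⟩
    exact TL_granule_le_IL hR hA hl.2 hsub x y
  · exact le_min zero_le_one (by linarith [(hR.mem x y).2, hA x])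

end Granules

theorem sortVal_eq_comp {n : ℕ} {g : Fin n → ℝ} (σ : Equiv.Perm (Fin n))
    (h : Monotone (g ∘ σ)) : sortVal g = g ∘ σ :=
  (Tuple.comp_sort_eq_comp_iff_monotone.2 h).symm

noncomputable def ywicLower {n : ℕ} (R : Fin n → Fin n → ℝ) (A : Fin n → ℝ) (y : Fin n) : ℝ :=
  (∑ i, sortVal (fun x => IL (R x y) (A x)) i * sortVal (fun x => R x y) i.rev) / ∑ x, R x y

theorem ywicLower_eq_of_monotone {n : ℕ} {R : Fin n → Fin n → ℝ} {A : Fin n → ℝ} {y : Fin n}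
    (σ τ : Equiv.Perm (Fin n)) (hσ : Monotone fun i => IL (R (σ i) y) (A (σ i)))
    (hτ : Monotone fun i => R (τ i) y) :
    ywicLower R A y = (∑ i, IL (R (σ i) y) (A (σ i)) * R (τ i.rev) y) / ∑ x, R x y := by
  rw [ywicLower, sortVal_eq_comp (g := fun x => IL (R x y) (A x)) σ hσ,
    sortVal_eq_comp (g := fun x => R x y) τ hτ]
  rfl

open Equiv in
theorem ywicLower_example :
    ywicLower (similarityOf ![1, 1/2, 1, 0, 0]) ![1, 1, 1, 0, 0] = ![1, 3/4, 1, 1/5, 1/5] := by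
  funext y
  fin_cases y <;>
    [rw [ywicLower_eq_of_monotone 1 (swap 0 3 * swap 1 4 * swap 2 4)];
     rw [ywicLower_eq_of_monotone (swap 0 3 * swap 1 4) (swap 1 4)];
     rw [ywicLower_eq_of_monotone 1 (swap 0 3 * swap 1 4 * swap 2 4)];
     rw [ywicLower_eq_of_monotone (swap 0 3 * swap 1 4) (swap 1 2)];
     rw [ywicLower_eq_of_monotone (swap 0 3 * swap 1 4) (swap 1 2)]] <;>
    simp [Fin.sum_univ_five, Fin.monotone_iff_le_succ, Fin.forall_fin_succ, swap_apply_def,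
      similarityOf, IL] <;>
    norm_num

theorem lowerApprox_example :
    lowerApprox (similarityOf ![1, 1/2, 1, 0, 0]) ![1, 3/4, 1, 1/5, 1/5] 1 = 7/10 := by
  refine le_antisymm ((inf'_le _ (mem_univ 3)).trans_eq ?_) (le_inf' _ _ fun x _ => ?_)
  · simp [similarityOf, IL]
    norm_num
  · fin_cases x <;> simp [similarityOf, IL] <;> norm_num

-- `sᵢ(g) = sortVal g (i-1)` is the `i`-th smallest value of `g`; `t_{6-i}` is `sortVal _ (i-1).rev`.
/-- the YWIC lower approximation (identity RIM quantifier) of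
`A = (1,1,1,0,0)` w.r.t. the given `T_L`-equivalence relation on a 5-element set
equals `(1, 0.75, 1, 0.2, 0.2)` and is neither a fixed point of the classical lower
approximation nor granularly representable. (`sᵢ(g) = sortVal g (i-1)` is the `i`-th
smallest value of `g`, and `t_{6-i}` pairs it with `sortVal _ (i-1).rev`.) -/
theorem stmt17 :
    let a : Fin 5 → ℝ := ![1, 1/2, 1, 0, 0]
    let R : Fin 5 → Fin 5 → ℝ := fun x y => 1 - |a x - a y|
    let A : Fin 5 → ℝ := ![1, 1, 1, 0, 0]
    let L : Fin 5 → ℝ := fun y =>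
      (∑ i : Fin 5, sortVal (fun x => IL (R x y) (A x)) i * sortVal (fun x => R x y) i.rev) /
        (∑ x, R x y)
    IsTEquiv TL R ∧
    L = ![1, 3/4, 1, 1/5, 1/5] ∧
    Finset.univ.inf' Finset.univ_nonempty (fun x => IL (R x 1) (L x)) = 7/10 ∧
    L 1 = 3/4 ∧
    Finset.univ.inf' Finset.univ_nonempty (fun x => IL (R x 1) (L x)) ≠ L 1 ∧
    ¬ GranRep TL R L := by
  intro a R A L
  have hR : IsTEquiv TL R := isTEquiv_similarityOf fun x => by fin_cases x <;> norm_num [a]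
  have hL : L = ![1, 3/4, 1, 1/5, 1/5] := ywicLower_example
  have hlow : lowerApprox R L 1 = 7/10 := by rw [hL]; exact lowerApprox_example
  have hL1 : L 1 = 3/4 := by rw [hL]; rfl
  refine ⟨hR, hL, hlow, hL1, hlow.trans_ne (by rw [hL1]; norm_num), fun hG => ?_⟩
  have hL_nonneg : ∀ x, 0 ≤ L x := by rw [hL]; intro x; fin_cases x <;> norm_num
  have hle := hG.le_lowerApprox hR hL_nonneg 1
  rw [hlow, hL1] at hle
  norm_num at hle
end
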